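/- arXiv:2108.12763 — 3 statements merged into one kernel-verified Lean document; each statement's English description precedes it below -/
import Mathlib

section
/- Fix a prime p, n ≥ 1 and 0 ≤ k ≤ n. Let B be the diagram with groups B_r = ℤ/p^{min(r,k)} for 0 ≤ r ≤ n, restriction maps res_r : B_r → B_{r−1} given by the natural surjection (i.e. reduction) if r ≤ k and by multiplication by p (via the natural inclusion-style map) if r > k, and transfer maps tr_r : B_{r−1} → B_r given by multiplication by p if r ≤ k and the natural map (multiplication by 1) if r > k. Let B' be the diagram with B'_0 = 0 and B'_r = ℤ/p for r ≥ 1, with all restriction maps above level 1 equal to the identity. Then any morphism of diagrams f : B → B' is uniquely determined by its level-1 component f_1 : ℤ/p → ℤ/p. -/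
private lemma zmod_hom_apply {m : ℕ} [NeZero m] {A : Type*} [AddCommMonoid A]
    (φ : ZMod m →+ A) (x : ZMod m) : φ x = x.val • φ 1 := by
  conv_lhs => rw [← ZMod.natCast_rightInverse x]
  rw [show ((x.val : ℕ) : ZMod m) = x.val • (1 : ZMod m) by simp [nsmul_eq_mul], map_nsmul]

private lemma zmod_hom_ext {m : ℕ} [NeZero m] {A : Type*} [AddCommMonoid A]
    (φ ψ : ZMod m →+ A) (h : φ 1 = ψ 1) : φ = ψ := by
  ext x
  rw [zmod_hom_apply φ x, zmod_hom_apply ψ x, h]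

/-- A morphism of diagrams from `B = B_{n̄,k̄ᶜ}` (level-`r` group `ℤ/p^{min(r,k)}`,
reduction restrictions for `r ≤ k` and multiplication-by-`p` for `r > k`, complementary
transfers) to `B' = B_{1̄,∅}` (trivial at level 0, `ℤ/p` above, identity restrictions
above level 1) is uniquely determined by its level-1 component. -/
theorem stmt7 (p n k : ℕ) (hp : p.Prime) (hn : 1 ≤ n) (hk : k ≤ n)
    (Bres : ∀ r : ℕ, ZMod (p ^ min r k) →+ ZMod (p ^ min (r - 1) k))
    (Btr : ∀ r : ℕ, ZMod (p ^ min (r - 1) k) →+ ZMod (p ^ min r k))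
    (hBres : ∀ r, 1 ≤ r → r ≤ n →
      Bres r 1 = (if r ≤ k then 1 else (p : ZMod (p ^ min (r - 1) k))))
    (hBtr : ∀ r, 1 ≤ r → r ≤ n →
      Btr r 1 = (if r ≤ k then (p : ZMod (p ^ min r k)) else 1))
    (B'res : ∀ r : ℕ, ZMod (p ^ min r 1) →+ ZMod (p ^ min (r - 1) 1))
    (B'tr : ∀ r : ℕ, ZMod (p ^ min (r - 1) 1) →+ ZMod (p ^ min r 1))
    (hB'res : ∀ r, 2 ≤ r → r ≤ n → B'res r 1 = 1)
    (hB'tr : ∀ r, 2 ≤ r → r ≤ n → B'tr r 1 = (p : ZMod (p ^ min r 1)))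
    (f g : ∀ r : ℕ, ZMod (p ^ min r k) →+ ZMod (p ^ min r 1))
    (hf : ∀ r, 1 ≤ r → r ≤ n →
      (∀ x, f (r - 1) (Bres r x) = B'res r (f r x)) ∧
      (∀ x, f r (Btr r x) = B'tr r (f (r - 1) x)))
    (hg : ∀ r, 1 ≤ r → r ≤ n →
      (∀ x, g (r - 1) (Bres r x) = B'res r (g r x)) ∧
      (∀ x, g r (Btr r x) = B'tr r (g (r - 1) x)))
    (h1 : f 1 = g 1) :
    ∀ r ≤ n, f r = g r := by
  intro r
  induction r with
  | zero =>
    intro _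
    haveI : Subsingleton (ZMod (p ^ min 0 1)) := by
      rw [show min 0 1 = 0 by simp, pow_zero]
      infer_instance
    ext x
    exact Subsingleton.elim _ _
  | succ r ih =>
    intro hr
    have hr' : r ≤ n := le_trans (Nat.le_succ r) hr
    have hfg : f r = g r := ih hr'
    rcases Nat.eq_zero_or_pos r with h0 | h1r
    · subst h0; exact h1
    haveI : NeZero (p ^ min (r + 1) k) := ⟨pow_ne_zero _ hp.ne_zero⟩
    haveI : NeZero (p ^ min (r + 1) 1) := ⟨pow_ne_zero _ hp.ne_zero⟩
    haveI : NeZero (p ^ min r 1) := ⟨pow_ne_zero _ hp.ne_zero⟩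
    have hmin1 : min (r + 1) 1 = 1 := Nat.min_eq_right (by omega)
    have hminr : min r 1 = 1 := Nat.min_eq_right h1r
    apply zmod_hom_ext
    by_cases hk' : r + 1 ≤ k
    · -- use restriction
      have hfres := (hf (r + 1) (by omega) hr).1 1
      have hgres := (hg (r + 1) (by omega) hr).1 1
      rw [hBres (r + 1) (by omega) hr, if_pos hk'] at hfres hgres
      -- hfres : f r 1 = B'res (r+1) (f (r+1) 1)
      rw [zmod_hom_apply (B'res (r + 1)) (f (r + 1) 1),
        hB'res (r + 1) (by omega) hr] at hfres
      rw [zmod_hom_apply (B'res (r + 1)) (g (r + 1) 1),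
        hB'res (r + 1) (by omega) hr] at hgres
      have heq : ((f (r + 1) 1).val • (1 : ZMod (p ^ min r 1)))
          = (g (r + 1) 1).val • (1 : ZMod (p ^ min r 1)) := by
        rw [← hfres, ← hgres]
        exact congrFun (congrArg DFunLike.coe hfg) 1
      simp only [nsmul_eq_mul, mul_one] at heq
      have hlt : ∀ x : ZMod (p ^ min (r + 1) 1), x.val < p ^ min r 1 := by
        intro x
        exact lt_of_lt_of_eq (ZMod.val_lt x) (by rw [hmin1, hminr])
      have hval : (f (r + 1) 1).val = (g (r + 1) 1).val := by
        have := congrArg ZMod.val heq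
        rwa [ZMod.val_cast_of_lt (hlt _), ZMod.val_cast_of_lt (hlt _)] at this
      exact ZMod.val_injective _ hval
    · -- use transfer
      have hftr := (hf (r + 1) (by omega) hr).2 1
      have hgtr := (hg (r + 1) (by omega) hr).2 1
      rw [hBtr (r + 1) (by omega) hr, if_neg hk'] at hftr hgtr
      rw [hftr, hgtr]
      exact congrArg _ (congrFun (congrArg DFunLike.coe hfg) 1)
end

section
/- In the setting of the previous statement, suppose f : B → B' is a morphism of diagrams whose level-1 component f_1 : ℤ/p → ℤ/p is an isomorphism. Then for each level r, the component f_r : ℤ/p^{min(r,k)} → ℤ/p is surjective if 1 ≤ r ≤ k and zero if r ≥ k+1. Consequently the cokernel of f is the diagram which is ℤ/p concentrated in levels r ≥ k+1 (zero for r ≤ k), and the kernel of f has level-r group ℤ/p^{min(r,k)−1} for 1 ≤ r ≤ k and ℤ/p^{min(r,k)} = ℤ/p^k for r ≥ k+1. -/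
private lemma zmod_hom_apply_s8 {a b : ℕ} [NeZero a] (g : ZMod a →+ ZMod b) (x : ZMod a) :
    g x = x.val • g 1 := by
  conv_lhs => rw [← ZMod.natCast_rightInverse x, ← mul_one ((x.val : ZMod a)),
    ← nsmul_eq_mul, map_nsmul]

/-- If a morphism of diagrams `f : B_{n̄,k̄ᶜ} → B_{1̄,∅}` is an isomorphism at level 1, then
`f_r` is surjective for `1 ≤ r ≤ k` and zero for `r ≥ k+1`; the cokernel is `ℤ/p`
concentrated in levels `r ≥ k+1`, and the kernel has level-`r` group `ℤ/p^{min(r,k)−1}`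
for `1 ≤ r ≤ k` and `ℤ/p^k` for `r ≥ k+1`. -/
theorem stmt8 (p n k : ℕ) (hp : p.Prime) (hn : 1 ≤ n) (hk : k ≤ n)
    (Bres : ∀ r : ℕ, ZMod (p ^ min r k) →+ ZMod (p ^ min (r - 1) k))
    (Btr : ∀ r : ℕ, ZMod (p ^ min (r - 1) k) →+ ZMod (p ^ min r k))
    (hBres : ∀ r, 1 ≤ r → r ≤ n →
      Bres r 1 = (if r ≤ k then 1 else (p : ZMod (p ^ min (r - 1) k))))
    (hBtr : ∀ r, 1 ≤ r → r ≤ n →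
      Btr r 1 = (if r ≤ k then (p : ZMod (p ^ min r k)) else 1))
    (B'res : ∀ r : ℕ, ZMod (p ^ min r 1) →+ ZMod (p ^ min (r - 1) 1))
    (B'tr : ∀ r : ℕ, ZMod (p ^ min (r - 1) 1) →+ ZMod (p ^ min r 1))
    (hB'res : ∀ r, 2 ≤ r → r ≤ n → B'res r 1 = 1)
    (hB'tr : ∀ r, 2 ≤ r → r ≤ n → B'tr r 1 = (p : ZMod (p ^ min r 1)))
    (f : ∀ r : ℕ, ZMod (p ^ min r k) →+ ZMod (p ^ min r 1))
    (hf : ∀ r, 1 ≤ r → r ≤ n →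
      (∀ x, f (r - 1) (Bres r x) = B'res r (f r x)) ∧
      (∀ x, f r (Btr r x) = B'tr r (f (r - 1) x)))
    (h1 : Function.Bijective (f 1)) :
    (∀ r, 1 ≤ r → r ≤ k → Function.Surjective (f r)) ∧
    (∀ r, k + 1 ≤ r → r ≤ n → f r = 0) ∧
    (∀ r, 1 ≤ r → r ≤ k → Subsingleton (ZMod (p ^ min r 1) ⧸ (f r).range)) ∧
    (∀ r, k + 1 ≤ r → r ≤ n →
      Nonempty ((ZMod (p ^ min r 1) ⧸ (f r).range) ≃+ ZMod p)) ∧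
    (∀ r, 1 ≤ r → r ≤ k → Nonempty ((f r).ker ≃+ ZMod (p ^ (min r k - 1)))) ∧
    (∀ r, k + 1 ≤ r → r ≤ n → Nonempty ((f r).ker ≃+ ZMod (p ^ k))) := by
  haveI : Fact p.Prime := ⟨hp⟩
  -- first, k = 0 is impossible
  rcases Nat.eq_zero_or_pos k with rfl | hk1
  · exfalso
    have hss : Subsingleton (ZMod (p ^ min 1 0)) := by
      rw [show min 1 0 = 0 by norm_num, pow_zero]
      infer_instance
    have hss2 : Subsingleton (ZMod (p ^ min 1 1)) := h1.2.subsingleton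
    have h01 : (1 : ZMod (p ^ min 1 1)) = 0 := Subsingleton.elim _ _
    rw [show (1 : ZMod (p ^ min 1 1)) = ((1 : ℕ) : ZMod (p ^ min 1 1)) by norm_num,
      ZMod.natCast_eq_zero_iff] at h01
    rw [show min 1 1 = 1 by norm_num, pow_one] at h01
    exact hp.one_lt.ne' (Nat.eq_one_of_dvd_one h01)
  -- nonvanishing of f r 1 for 1 ≤ r ≤ k
  have hc1 : f 1 1 ≠ 0 := by
    intro h
    have h10 : (1 : ZMod (p ^ min 1 k)) = 0 := h1.1 (by rw [h, map_zero])
    rw [show (1 : ZMod (p ^ min 1 k)) = ((1 : ℕ) : ZMod (p ^ min 1 k)) by norm_num,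
      ZMod.natCast_eq_zero_iff, min_eq_left hk1, pow_one] at h10
    exact hp.one_lt.ne' (Nat.eq_one_of_dvd_one h10)
  have hne : ∀ r, 1 ≤ r → r ≤ k → f r 1 ≠ 0 := by
    intro r hr1
    induction r, hr1 using Nat.le_induction with
    | base => exact fun _ => hc1
    | succ r hr ih =>
      intro hrk h0
      have hcomp := (hf (r + 1) (by omega) (by omega)).1 1
      rw [hBres (r + 1) (by omega) (by omega), if_pos hrk, h0, map_zero] at hcomp
      exact ih (by omega) hcomp
  -- surjectivity for 1 ≤ r ≤ k
  have hsurj : ∀ r, 1 ≤ r → r ≤ k → Function.Surjective (f r) := by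
    intro r hr1 hrk y
    haveI : Fact (p ^ min r 1).Prime := ⟨by rw [min_eq_right hr1, pow_one]; exact hp⟩
    have hc : f r 1 ≠ 0 := hne r hr1 hrk
    set c := f r 1 with hcdef
    refine ⟨(((y * c⁻¹).val : ℕ) : ZMod (p ^ min r k)), ?_⟩
    rw [zmod_hom_apply_s8, ← hcdef]
    have hlt : (y * c⁻¹).val < p ^ min r k := by
      calc (y * c⁻¹).val < p ^ min r 1 := ZMod.val_lt _
        _ ≤ p ^ min r k := Nat.pow_le_pow_right hp.pos (by omega)
    rw [ZMod.val_natCast_of_lt hlt, nsmul_eq_mul, ZMod.natCast_rightInverse _,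
      mul_assoc, inv_mul_cancel₀ hc, mul_one]
  -- vanishing for k + 1 ≤ r ≤ n
  have hzero1 : ∀ r, k + 1 ≤ r → r ≤ n → f r 1 = 0 := by
    intro r hkr hrn
    have hcomp := (hf r (by omega) hrn).1 1
    rw [hBres r (by omega) hrn, if_neg (by omega)] at hcomp
    have hL : f (r - 1) ((p : ℕ) : ZMod (p ^ min (r - 1) k)) = 0 := by
      rw [show ((p : ℕ) : ZMod (p ^ min (r - 1) k)) = p • (1 : ZMod (p ^ min (r - 1) k)) by
        rw [nsmul_eq_mul, mul_one], map_nsmul, nsmul_eq_mul]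
      have hp0 : ((p : ℕ) : ZMod (p ^ min (r - 1) 1)) = 0 := by
        rw [ZMod.natCast_eq_zero_iff, min_eq_right (by omega : 1 ≤ r - 1), pow_one]
      rw [hp0, zero_mul]
    rw [hL, zmod_hom_apply_s8 (B'res r), hB'res r (by omega) hrn] at hcomp
    have hval0 : ((f r 1).val : ZMod (p ^ min (r - 1) 1)) = 0 := by
      have := hcomp.symm
      rwa [nsmul_eq_mul, mul_one] at this
    rw [ZMod.natCast_eq_zero_iff, min_eq_right (by omega : 1 ≤ r - 1), pow_one]
      at hval0
    have hlt : (f r 1).val < p :=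
      lt_of_lt_of_eq (ZMod.val_lt _) (by rw [min_eq_right (by omega : 1 ≤ r), pow_one])
    exact (ZMod.val_eq_zero _).mp (Nat.eq_zero_of_dvd_of_lt hval0 hlt)
  have hzero : ∀ r, k + 1 ≤ r → r ≤ n → f r = 0 := by
    intro r hkr hrn
    ext x
    rw [zmod_hom_apply_s8, hzero1 r hkr hrn, smul_zero]
    rfl
  refine ⟨hsurj, hzero, ?_, ?_, ?_, ?_⟩
  · -- cokernel trivial for 1 ≤ r ≤ k
    intro r hr1 hrk
    rw [AddMonoidHom.range_eq_top.mpr (hsurj r hr1 hrk)]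
    exact QuotientAddGroup.subsingleton_quotient_top
  · -- cokernel ≃ ZMod p for k + 1 ≤ r ≤ n
    intro r hkr hrn
    have h0 : (f r).range = ⊥ := by rw [hzero r hkr hrn]; exact AddMonoidHom.range_zero
    exact ⟨((QuotientAddGroup.quotientAddEquivOfEq h0).trans
      QuotientAddGroup.quotientBot).trans
      (ZMod.ringEquivCongr (by rw [min_eq_right (by omega : 1 ≤ r), pow_one])).toAddEquiv⟩
  · -- kernel for 1 ≤ r ≤ k
    intro r hr1 hrk
    haveI : IsAddCyclic ↥(f r).ker := AddSubgroup.isAddCyclic _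
    have e := zmodAddCyclicAddEquiv (inferInstance : IsAddCyclic ↥(f r).ker)
    have hq : Nat.card (ZMod (p ^ min r k) ⧸ (f r).ker) = p ^ min r 1 := by
      rw [Nat.card_congr
        (QuotientAddGroup.quotientKerEquivOfSurjective (f r) (hsurj r hr1 hrk)).toEquiv,
        Nat.card_zmod]
    obtain ⟨m, hm⟩ : ∃ m, Nat.card ↥(f r).ker = m := ⟨_, rfl⟩
    have hmul := AddSubgroup.card_eq_card_quotient_mul_card_addSubgroup (f r).ker
    rw [Nat.card_zmod, hq, hm] at hmul
    rw [min_eq_right hr1, pow_one] at hmul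
    have hcard : m = p ^ (min r k - 1) := by
      have hmrk : min r k = (min r k - 1) + 1 := by omega
      rw [hmrk, pow_succ'] at hmul
      exact Nat.eq_of_mul_eq_mul_left hp.pos hmul.symm
    exact ⟨e.symm.trans (ZMod.ringEquivCongr (hm.trans hcard)).toAddEquiv⟩
  · -- kernel for k + 1 ≤ r ≤ n
    intro r hkr hrn
    have h0 : (f r).ker = ⊤ := by rw [hzero r hkr hrn]; exact AddMonoidHom.ker_zero
    rw [h0]
    exact ⟨AddSubgroup.topEquiv.trans
      (ZMod.ringEquivCongr (by rw [min_eq_right (by omega : k ≤ r)])).toAddEquiv⟩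
end

section
/- Fix a prime p and n ≥ 2. The short exact sequence of diagrams 0 → B → T(n) → ℤ_{1̄} → 0 of the previous statement does not split as a sequence of diagrams: there is no morphism of diagrams s : ℤ_{1̄} → T(n) with (projection) ∘ s = id. Equivalently, T(n) is not isomorphic as a diagram to the direct sum B ⊕ ℤ_{1̄}. -/
def Tres1 (p : ℕ) : ℤ × ZMod p →+ ℤ :=
  AddMonoidHom.mk' (fun x => (p : ℤ) * x.1) (by intro a b; simp [mul_add])

def Ttr1 (p : ℕ) : ℤ →+ ℤ × ZMod p :=
  AddMonoidHom.mk' (fun m => (m, -(m : ZMod p))) (by intro a b; simp [Prod.ext_iff]; ring)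

def Tresk (p : ℕ) : ℤ × ZMod p →+ ℤ × ZMod p :=
  AddMonoidHom.mk' (fun x => (x.1, 0)) (by intro a b; simp)

def Ttrk (p : ℕ) : ℤ × ZMod p →+ ℤ × ZMod p :=
  AddMonoidHom.mk' (fun x => ((p : ℤ) * x.1, x.2)) (by intro a b; simp [Prod.ext_iff]; ring)

/-- Level-1 restriction of the direct sum `B ⊕ ℤ_{1̄}`. -/
def Dres1 (p : ℕ) : ZMod p × ℤ →+ ℤ :=
  AddMonoidHom.mk' (fun x => (p : ℤ) * x.2) (by intro a b; simp [mul_add])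

/-- Level-1 transfer of the direct sum `B ⊕ ℤ_{1̄}`. -/
def Dtr1 (p : ℕ) : ℤ →+ ZMod p × ℤ :=
  AddMonoidHom.mk' (fun m => (0, m)) (by intro a b; simp)

/-- Higher restriction of the direct sum `B ⊕ ℤ_{1̄}`. -/
def Dresk (p : ℕ) : ZMod p × ℤ →+ ZMod p × ℤ :=
  AddMonoidHom.prodMap (p • AddMonoidHom.id (ZMod p)) (AddMonoidHom.id ℤ)

/-- Higher transfer of the direct sum `B ⊕ ℤ_{1̄}`. -/
def Dtrk (p : ℕ) : ZMod p × ℤ →+ ZMod p × ℤ :=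
  AddMonoidHom.prodMap (AddMonoidHom.id (ZMod p)) (AddMonoidHom.mulLeft (p : ℤ))

/-! A section `s` would give `tr₂ (tr₁ 1) = s₂ (p * 1) = p • s₂ 1`, but `tr₂ (tr₁ 1) = (p, -1)`
is not divisible by `p` in `ℤ × ℤ/p`. An isomorphism `e` with `B ⊕ ℤ_{1̄}` would kill the torsion
element `(0, 1) = res₂ (1, 0) - tr₁ 1` of level 1: its `ℤ`-coordinate vanishes because `ℤ` is
torsion-free, and its `B`-coordinate because the level-2 restriction and the level-1 transfer of
`B ⊕ ℤ_{1̄}` both land in `0 × ℤ`. -/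

lemma AddMonoidHom.eq_zero_of_zmod_to_int {p : ℕ} [NeZero p] (f : ZMod p →+ ℤ) : f = 0 := by
  ext z
  have h : p • f z = 0 := by rw [← map_nsmul, ZModModule.char_nsmul_eq_zero, map_zero]
  exact (smul_eq_zero.mp h).resolve_left (NeZero.ne p)

lemma Ttrk_Ttr1_one_ne_nsmul (p : ℕ) [Fact (1 < p)] (y : ℤ × ZMod p) :
    p • y ≠ Ttrk p (Ttr1 p 1) := by
  intro h
  simpa [Ttrk, Ttr1] using congrArg Prod.snd h

lemma map_zero_one_eq_zero_of_commute_Ttr1_Tresk (p : ℕ) [NeZero p]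
    (f : ℤ × ZMod p →+ ZMod p × ℤ) (e₀ : ℤ → ℤ) (g : ℤ × ZMod p → ZMod p × ℤ)
    (htr : ∀ x, f (Ttr1 p x) = Dtr1 p (e₀ x)) (hres : ∀ x, f (Tresk p x) = Dresk p (g x)) :
    f (0, 1) = 0 := by
  have hdecomp : ((0 : ℤ), (1 : ZMod p)) = Tresk p (1, 0) - Ttr1 p 1 := by
    simp [Tresk, Ttr1]
  ext
  · rw [hdecomp, map_sub, htr, hres]
    simp [Dresk, Dtr1, ZModModule.char_nsmul_eq_zero]
  · have hsnd : (AddMonoidHom.snd _ _).comp (f.comp (AddMonoidHom.inr ℤ (ZMod p))) = 0 :=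
      AddMonoidHom.eq_zero_of_zmod_to_int _
    exact DFunLike.congr_fun hsnd 1

/-- The levelwise split short exact sequence `0 → B → T(n) → ℤ_{1̄} → 0` does not split as
a sequence of diagrams: there is no diagram-morphism section of the projection, and `T(n)`
is not isomorphic as a diagram to `B ⊕ ℤ_{1̄}`. -/
theorem stmt12 (p n : ℕ) (hp : p.Prime) (hn : 2 ≤ n) :
    (¬ ∃ s : ℕ → (ℤ →+ ℤ × ZMod p),
      (∀ k, 1 ≤ k → k ≤ n → (AddMonoidHom.fst ℤ (ZMod p)).comp (s k) = AddMonoidHom.id ℤ) ∧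
      (∀ x : ℤ, Tres1 p (s 1 x) = (p : ℤ) * x) ∧
      (∀ x : ℤ, s 1 x = Ttr1 p x) ∧
      (∀ k, 2 ≤ k → k ≤ n →
        (∀ x : ℤ, Tresk p (s k x) = s (k - 1) x) ∧
        (∀ x : ℤ, s k ((p : ℤ) * x) = Ttrk p (s (k - 1) x)))) ∧
    (¬ ∃ (e : ℕ → (ℤ × ZMod p ≃+ ZMod p × ℤ)) (e0 : ℤ ≃+ ℤ),
      (∀ x : ℤ × ZMod p, e0 (Tres1 p x) = Dres1 p (e 1 x)) ∧
      (∀ x : ℤ, e 1 (Ttr1 p x) = Dtr1 p (e0 x)) ∧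
      (∀ k, 2 ≤ k → k ≤ n →
        (∀ x : ℤ × ZMod p, e (k - 1) (Tresk p x) = Dresk p (e k x)) ∧
        (∀ x : ℤ × ZMod p, e k (Ttrk p x) = Dtrk p (e (k - 1) x)))) := by
  have := Fact.mk hp
  constructor
  · rintro ⟨s, -, -, hs₁, hs⟩
    apply Ttrk_Ttr1_one_ne_nsmul p (s 2 1)
    rw [← hs₁, ← (hs 2 le_rfl hn).2, ← map_nsmul, nsmul_eq_mul, mul_one]
  · rintro ⟨e, e₀, -, htr, he⟩
    have h := map_zero_one_eq_zero_of_commute_Ttr1_Tresk p (e 1) e₀ (e 2) htr (he 2 le_rfl hn).1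
    have h01 : ((0 : ℤ), (1 : ZMod p)) = 0 := (e 1).injective (by rw [map_zero]; exact h)
    exact one_ne_zero (congrArg Prod.snd h01)
end
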